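/- arXiv:2604.03958 — 2 statements merged into one kernel-verified Lean document; each statement's English description precedes it below -/
import Mathlib

section
/- Let G and H be real symmetric positive definite n×n matrices and let r be a natural number. Then every eigenvalue of the matrix I − ((G+H)⁻¹G)^{r+1} (viewed as a complex matrix) is real and lies in the open interval (0,1). -/
/-!
If `(G + H)⁻¹ G v = μ v` with `v ≠ 0`, then `G v = μ (G + H) v`, so
`μ = v* G v / (v* G v + v* H v)` is a quotient of positive reals lying in `(0, 1)`; here `G` and
`H` act on complex vectors, where they remain positive definite. The spectral mapping theorem for
the polynomial `1 - X ^ (r + 1)` then carries `(0, 1)` into itself.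
-/

open Matrix
open scoped ComplexOrder

namespace Matrix

variable {n : Type*} [Fintype n] {𝕜 : Type*} [RCLike 𝕜]

lemma exists_mulVec_eq_smul_of_mem_spectrum [DecidableEq n] {K : Type*} [Field K]
    {A : Matrix n n K} {μ : K} (hμ : μ ∈ spectrum K A) : ∃ v ≠ 0, A *ᵥ v = μ • v := by
  rw [← spectrum_toLin', ← Module.End.hasEigenvalue_iff_mem_spectrum] at hμ
  obtain ⟨v, hv⟩ := hμ.exists_hasEigenvector
  exact ⟨v, hv.2, by simpa using hv.apply_eq_smul⟩

lemma re_star_dotProduct_map_ofReal_mulVec (A : Matrix n n ℝ) (x : n → 𝕜) :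
    RCLike.re (star x ⬝ᵥ (A.map RCLike.ofReal *ᵥ x)) =
      (RCLike.re ∘ x) ⬝ᵥ (A *ᵥ (RCLike.re ∘ x)) + (RCLike.im ∘ x) ⬝ᵥ (A *ᵥ (RCLike.im ∘ x)) := by
  simp only [dotProduct, mulVec, Finset.mul_sum, map_sum, ← Finset.sum_add_distrib]
  refine Finset.sum_congr rfl fun i _ => Finset.sum_congr rfl fun j _ => ?_
  simp [RCLike.mul_re, RCLike.conj_re]

lemma PosDef.map_ofReal {A : Matrix n n ℝ} (hA : A.PosDef) :
    (A.map (RCLike.ofReal : ℝ → 𝕜)).PosDef := by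
  have hherm : (A.map (RCLike.ofReal : ℝ → 𝕜)).IsHermitian :=
    hA.isHermitian.map _ fun x => by simp
  refine .of_dotProduct_mulVec_pos hherm fun x hx =>
    RCLike.pos_iff.mpr ⟨?_, hherm.im_star_dotProduct_mulVec_self x⟩
  have hquad (y : n → ℝ) : 0 ≤ y ⬝ᵥ (A *ᵥ y) := by
    simpa only [star_trivial] using hA.posSemidef.dotProduct_mulVec_nonneg y
  have hquad_pos {y : n → ℝ} (hy : y ≠ 0) : 0 < y ⬝ᵥ (A *ᵥ y) := by
    simpa only [star_trivial] using hA.dotProduct_mulVec_pos hy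
  have hre_or_im : RCLike.re ∘ x ≠ 0 ∨ RCLike.im ∘ x ≠ 0 := by
    by_contra! h
    exact hx <| funext fun i => RCLike.ext (by simpa using congrFun h.1 i)
      (by simpa using congrFun h.2 i)
  rw [re_star_dotProduct_map_ofReal_mulVec]
  rcases hre_or_im with hre | him
  · linarith [hquad_pos hre, hquad (RCLike.im ∘ x)]
  · linarith [hquad (RCLike.re ∘ x), hquad_pos him]

lemma PosDef.exists_mem_Ioo_eq_ofReal_of_mulVec_eq_smul_mulVec {A B : Matrix n n 𝕜}
    (hA : A.PosDef) (hBA : (B - A).PosDef) {μ : 𝕜} {v : n → 𝕜} (hv : v ≠ 0)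
    (h : A *ᵥ v = μ • (B *ᵥ v)) : ∃ t ∈ Set.Ioo (0 : ℝ) 1, μ = t := by
  obtain ⟨a, ha, hva⟩ := RCLike.pos_iff_exists_ofReal.mp (hA.dotProduct_mulVec_pos hv)
  obtain ⟨c, hc, hvc⟩ := RCLike.pos_iff_exists_ofReal.mp (hBA.dotProduct_mulVec_pos hv)
  have hvb : star v ⬝ᵥ (B *ᵥ v) = ((a + c : ℝ) : 𝕜) := by
    rw [RCLike.ofReal_add, hva, hvc, sub_mulVec, dotProduct_sub]
    ring
  have hμ : (a : 𝕜) = μ * (a + c : ℝ) := by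
    rw [hva, h, dotProduct_smul, hvb, smul_eq_mul]
  refine ⟨a / (a + c), ⟨by positivity, (div_lt_one (by positivity)).mpr (by linarith)⟩, ?_⟩
  rw [RCLike.ofReal_div, hμ, mul_div_cancel_right₀ _ (RCLike.ofReal_ne_zero.mpr (by positivity))]

lemma PosDef.exists_mem_Ioo_eq_ofReal_of_mem_spectrum_inv_mul [DecidableEq n]
    {G S : Matrix n n ℝ} (hG : G.PosDef) (hSG : (S - G).PosDef) {μ : 𝕜}
    (hμ : μ ∈ spectrum 𝕜 ((S⁻¹ * G).map (RCLike.ofReal : ℝ → 𝕜))) :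
    ∃ t ∈ Set.Ioo (0 : ℝ) 1, μ = t := by
  obtain ⟨v, hv, hμv⟩ := exists_mulVec_eq_smul_of_mem_spectrum hμ
  have hS : IsUnit S.det :=
    (isUnit_iff_isUnit_det S).mp (sub_add_cancel S G ▸ hSG.add hG).isUnit
  have hSM : S.map (RCLike.ofReal : ℝ → 𝕜) * (S⁻¹ * G).map RCLike.ofReal =
      G.map RCLike.ofReal := by
    rw [← Matrix.map_mul, mul_nonsing_inv_cancel_left _ _ hS]
  refine hG.map_ofReal.exists_mem_Ioo_eq_ofReal_of_mulVec_eq_smul_mulVec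
    (B := S.map RCLike.ofReal) ?_ hv ?_
  · rw [← Matrix.map_sub _ RCLike.ofReal_sub]
    exact hSG.map_ofReal
  · rw [← hSM, ← mulVec_mulVec, hμv, mulVec_smul]

end Matrix

/-- Every eigenvalue of `I − ((G+H)⁻¹G)^{r+1}` (as a complex matrix) is a real number
in the open interval `(0,1)`. -/
theorem stmt8 {n : ℕ} (G H : Matrix (Fin n) (Fin n) ℝ)
    (hG : G.PosDef) (hH : H.PosDef) (r : ℕ) :
    ∀ μ ∈ spectrum ℂ ((1 - ((G + H)⁻¹ * G) ^ (r + 1)).map (Complex.ofReal)),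
      ∃ t : ℝ, μ = (t : ℂ) ∧ 0 < t ∧ t < 1 := by
  intro μ hμ
  have hmap : (1 - ((G + H)⁻¹ * G) ^ (r + 1)).map Complex.ofReal =
      algebraMap ℂ _ 1 - (((G + H)⁻¹ * G).map Complex.ofReal) ^ (r + 1) := by
    change Complex.ofRealHom.mapMatrix _ = _
    rw [map_sub, map_one, map_pow, map_one]
    rfl
  rw [hmap, ← spectrum.singleton_sub_eq, spectrum.map_pow_of_pos _ r.add_one_pos] at hμ
  obtain ⟨_, rfl, _, ⟨ν, hν, rfl⟩, rfl⟩ := hμ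
  obtain ⟨t, ⟨ht0, ht1⟩, rfl⟩ :=
    hG.exists_mem_Ioo_eq_ofReal_of_mem_spectrum_inv_mul (S := G + H)
      (by rwa [add_sub_cancel_left]) hν
  refine ⟨1 - t ^ (r + 1), by rw [RCLike.ofReal_eq_complex_ofReal]; push_cast; ring, ?_, ?_⟩
  · linarith [pow_lt_one₀ ht0.le ht1 r.add_one_ne_zero]
  · linarith [pow_pos ht0 (r + 1)]
end

section
/- Let X = ℝᵖ and U = ℝᵐ, let f : X × U → X, let ℓ : X × U → ℝ be a nonnegative stage cost, let N ≥ 1, and define the horizon-N value V(z) = inf over control sequences (u(0),…,u(N−1)) of Σ_{τ=0}^{N−1} ℓ(x(τ),u(τ)) with x(0) = z, x(τ+1) = f(x(τ),u(τ)). Consider the closed-loop sequence z₀ = z and z_{k+1} = f(z_k, u*_k(0)), where for each k, u*_k is a control sequence attaining the infimum V(z_k), with trajectory x*_k, and assume that for each k there exists w ∈ U with ℓ(x*_k(N), w) = 0. Then the sequence (V(z_k))_{k∈ℕ} is nonincreasing and converges, and the closed-loop stage costs satisfy ℓ(z_k, u*_k(0)) → 0 as k → ∞. -/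
/-!
Receding-horizon argument: shifting the optimal sequence `u*_k` by one step and appending
the zero-cost terminal control `w` gives a candidate from `z_{k+1}` whose cost is
`V(z_k) - ℓ(z_k, u*_k(0))`. Hence `V(z_{k+1}) + ℓ(z_k, u*_k(0)) ≤ V(z_k)`, so `V(z_k)` is
nonincreasing and bounded below by `0`, thus convergent, and the stage costs are squeezed
between `0` and the vanishing gaps `V(z_k) - V(z_{k+1})`.
-/

open Filter

open Fin.NatCast in
/-- The predicted state trajectory from initial state `z` under the control
sequence `u = (u(0),…,u(N−1))`: `x(0) = z`, `x(τ+1) = f(x(τ),u(τ))`. -/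
noncomputable def mpcTraj {p m N : ℕ} [NeZero N]
    (f : (Fin p → ℝ) → (Fin m → ℝ) → Fin p → ℝ)
    (z : Fin p → ℝ) (u : Fin N → Fin m → ℝ) : ℕ → Fin p → ℝ
  | 0 => z
  | τ + 1 => f (mpcTraj f z u τ) (u τ)

open Fin.NatCast in
/-- The horizon-`N` cost `Σ_{τ=0}^{N−1} ℓ(x(τ),u(τ))` of the control sequence `u`. -/
noncomputable def mpcCost {p m N : ℕ} [NeZero N]
    (f : (Fin p → ℝ) → (Fin m → ℝ) → Fin p → ℝ)
    (ℓ : (Fin p → ℝ) → (Fin m → ℝ) → ℝ)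
    (z : Fin p → ℝ) (u : Fin N → Fin m → ℝ) : ℝ :=
  ∑ τ ∈ Finset.range N, ℓ (mpcTraj f z u τ) (u τ)

/-- The horizon-`N` value function `V(z) = inf_u Σ_{τ=0}^{N−1} ℓ(x(τ),u(τ))`. -/
noncomputable def mpcValue {p m : ℕ} (N : ℕ) [NeZero N]
    (f : (Fin p → ℝ) → (Fin m → ℝ) → Fin p → ℝ)
    (ℓ : (Fin p → ℝ) → (Fin m → ℝ) → ℝ)
    (z : Fin p → ℝ) : ℝ :=
  ⨅ u : Fin N → Fin m → ℝ, mpcCost f ℓ z u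

def shiftControl {α : Type*} {N : ℕ} (u : Fin N → α) (w : α) : Fin N → α :=
  fun τ => if h : τ.val + 1 < N then u ⟨τ.val + 1, h⟩ else w

section Shift

open Fin.NatCast

variable {α : Type*} {N : ℕ} [NeZero N] (u : Fin N → α) (w : α)

theorem shiftControl_natCast_of_succ_lt {τ : ℕ} (h : τ + 1 < N) :
    shiftControl u w (τ : Fin N) = u ((τ + 1 : ℕ) : Fin N) := by
  have hτ : ((τ : Fin N) : ℕ) = τ := Fin.val_cast_of_lt (by omega)
  simp only [shiftControl, hτ, dif_pos h]
  congr 1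
  ext
  rw [Fin.val_cast_of_lt h]

theorem shiftControl_natCast_pred : shiftControl u w ((N - 1 : ℕ) : Fin N) = w := by
  have hN := Nat.pos_of_ne_zero (NeZero.ne N)
  have h : (((N - 1 : ℕ) : Fin N) : ℕ) = N - 1 := Fin.val_cast_of_lt (by omega)
  simp only [shiftControl, h]
  exact dif_neg (by omega)

end Shift

section ClosedLoop

open Fin.NatCast

variable {p m N : ℕ} [NeZero N] (f : (Fin p → ℝ) → (Fin m → ℝ) → Fin p → ℝ)
  (ℓ : (Fin p → ℝ) → (Fin m → ℝ) → ℝ)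

theorem mpcTraj_shiftControl (z : Fin p → ℝ) (u : Fin N → Fin m → ℝ) (w : Fin m → ℝ) :
    ∀ τ < N, mpcTraj f (f z (u 0)) (shiftControl u w) τ = mpcTraj f z u (τ + 1)
  | 0, _ => by simp [mpcTraj]
  | τ + 1, h => by
    rw [mpcTraj, mpcTraj_shiftControl z u w τ (by omega), shiftControl_natCast_of_succ_lt u w h]
    rfl

theorem mpcCost_shiftControl_add (z : Fin p → ℝ) (u : Fin N → Fin m → ℝ) (w : Fin m → ℝ) :
    mpcCost f ℓ (f z (u 0)) (shiftControl u w) + ℓ z (u 0) =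
      mpcCost f ℓ z u + ℓ (mpcTraj f z u N) w := by
  obtain ⟨M, rfl⟩ : ∃ M, N = M + 1 := Nat.exists_eq_succ_of_ne_zero (NeZero.ne N)
  have hlast : ℓ (mpcTraj f (f z (u 0)) (shiftControl u w) M) (shiftControl u w (M : Fin (M + 1)))
      = ℓ (mpcTraj f z u (M + 1)) w := by
    rw [mpcTraj_shiftControl f z u w M (by omega)]
    simpa using congrArg (ℓ (mpcTraj f z u (M + 1))) (shiftControl_natCast_pred u w)
  have hbody : ∀ τ ∈ Finset.range M,
      ℓ (mpcTraj f (f z (u 0)) (shiftControl u w) τ) (shiftControl u w (τ : Fin (M + 1)))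
        = ℓ (mpcTraj f z u (τ + 1)) (u ((τ + 1 : ℕ) : Fin (M + 1))) := fun τ hmem => by
    have hτ : τ < M := Finset.mem_range.mp hmem
    rw [mpcTraj_shiftControl f z u w τ (by omega), shiftControl_natCast_of_succ_lt u w (by omega)]
  rw [mpcCost, mpcCost, Finset.sum_range_succ, hlast, Finset.sum_congr rfl hbody,
    Finset.sum_range_succ' (fun τ => ℓ (mpcTraj f z u τ) (u (τ : Fin (M + 1))))]
  simp only [mpcTraj, Nat.cast_zero]
  ring

variable {f ℓ}

theorem mpcCost_nonneg (hℓ : ∀ x u, 0 ≤ ℓ x u) (z : Fin p → ℝ) (u : Fin N → Fin m → ℝ) :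
    0 ≤ mpcCost f ℓ z u :=
  Finset.sum_nonneg fun _ _ => hℓ _ _

theorem mpcValue_nonneg (hℓ : ∀ x u, 0 ≤ ℓ x u) (z : Fin p → ℝ) : 0 ≤ mpcValue N f ℓ z :=
  le_ciInf (mpcCost_nonneg hℓ z)

theorem mpcValue_le_mpcCost (hℓ : ∀ x u, 0 ≤ ℓ x u) (z : Fin p → ℝ) (u : Fin N → Fin m → ℝ) :
    mpcValue N f ℓ z ≤ mpcCost f ℓ z u :=
  ciInf_le ⟨0, Set.forall_mem_range.mpr (mpcCost_nonneg hℓ z)⟩ u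

theorem mpcValue_apply_add_le_mpcCost (hℓ : ∀ x u, 0 ≤ ℓ x u) {z : Fin p → ℝ}
    {u : Fin N → Fin m → ℝ} {w : Fin m → ℝ} (hw : ℓ (mpcTraj f z u N) w = 0) :
    mpcValue N f ℓ (f z (u 0)) + ℓ z (u 0) ≤ mpcCost f ℓ z u := by
  calc mpcValue N f ℓ (f z (u 0)) + ℓ z (u 0)
      ≤ mpcCost f ℓ (f z (u 0)) (shiftControl u w) + ℓ z (u 0) := by
        gcongr
        exact mpcValue_le_mpcCost hℓ _ _
    _ = mpcCost f ℓ z u := by rw [mpcCost_shiftControl_add, hw, add_zero]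

end ClosedLoop

theorem antitone_tendsto_of_succ_add_le {a c : ℕ → ℝ} (hbdd : BddBelow (Set.range a))
    (hc : ∀ k, 0 ≤ c k) (hdecr : ∀ k, a (k + 1) + c k ≤ a k) :
    Antitone a ∧ (∃ ζ, Tendsto a atTop (nhds ζ)) ∧ Tendsto c atTop (nhds 0) := by
  have hanti : Antitone a := antitone_nat_of_succ_le fun k => by linarith [hc k, hdecr k]
  have hconv := tendsto_atTop_ciInf hanti hbdd
  have hgap : Tendsto (fun k => a k - a (k + 1)) atTop (nhds 0) := by
    simpa using hconv.sub (hconv.comp (tendsto_add_atTop_nat 1))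
  exact ⟨hanti, ⟨_, hconv⟩, squeeze_zero hc (fun k => by linarith [hdecr k]) hgap⟩

/-- Along the MPC closed loop `z_{k+1} = f(z_k, u*_k(0))`, where each `u*_k` attains
the infimum `V(z_k)` and admits a zero-cost terminal control, the optimal costs
`V(z_k)` are nonincreasing and convergent, and the executed stage costs
`ℓ(z_k, u*_k(0))` tend to zero. -/
theorem stmt16 {p m N : ℕ} [NeZero N]
    (f : (Fin p → ℝ) → (Fin m → ℝ) → Fin p → ℝ)
    (ℓ : (Fin p → ℝ) → (Fin m → ℝ) → ℝ)
    (hℓ : ∀ x u, 0 ≤ ℓ x u)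
    (z : ℕ → Fin p → ℝ)
    (ustar : ℕ → Fin N → Fin m → ℝ)
    (hstep : ∀ k, z (k + 1) = f (z k) (ustar k 0))
    (hopt : ∀ k, mpcCost f ℓ (z k) (ustar k) = mpcValue N f ℓ (z k))
    (hterm : ∀ k, ∃ w : Fin m → ℝ, ℓ (mpcTraj f (z k) (ustar k) N) w = 0) :
    (∀ k, mpcValue N f ℓ (z (k + 1)) ≤ mpcValue N f ℓ (z k)) ∧
    (∃ ζ : ℝ, Tendsto (fun k => mpcValue N f ℓ (z k)) atTop (nhds ζ)) ∧
    Tendsto (fun k => ℓ (z k) (ustar k 0)) atTop (nhds 0) := by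
  have hdecr : ∀ k, mpcValue N f ℓ (z (k + 1)) + ℓ (z k) (ustar k 0) ≤ mpcValue N f ℓ (z k) :=
    fun k => by
      obtain ⟨w, hw⟩ := hterm k
      rw [hstep k, ← hopt k]
      exact mpcValue_apply_add_le_mpcCost hℓ hw
  have hbdd : BddBelow (Set.range fun k => mpcValue N f ℓ (z k)) :=
    ⟨0, Set.forall_mem_range.mpr fun k => mpcValue_nonneg hℓ (z k)⟩
  obtain ⟨hanti, hconv, hstage⟩ :=
    antitone_tendsto_of_succ_add_le hbdd (fun k => hℓ (z k) (ustar k 0)) hdecr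
  exact ⟨fun k => hanti k.le_succ, hconv, hstage⟩
end
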